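/- For n ≥ 3, the subposet (PE_n, ≤_dref) of the noncrossing partition lattice is a lattice: every pair of elements of PE_n has a least upper bound and a greatest lower bound within PE_n. -/

import Mathlib

/-- A set partition of `[n]` (as a setoid on `Fin n`) is noncrossing. -/
def IsNoncrossing {n : ℕ} (x : Setoid (Fin n)) : Prop :=
  ∀ i j k l : Fin n, i < j → j < k → k < l → x.r i k → x.r j l → x.r i j

/-- `B` is a block of the set partition `x`. -/
def IsBlock {n : ℕ} (x : Setoid (Fin n)) (B : Set (Fin n)) : Prop :=
  ∃ a, B = {b | x.r a b}

/-- The set partition whose unique (possibly) non-singleton block is `S`. -/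
def blockSetoid {n : ℕ} (S : Set (Fin n)) : Setoid (Fin n) where
  r a b := a = b ∨ (a ∈ S ∧ b ∈ S)
  iseqv := by
    refine ⟨fun _ => Or.inl rfl, ?_, ?_⟩
    · rintro a b (rfl | ⟨h1, h2⟩)
      · exact Or.inl rfl
      · exact Or.inr ⟨h2, h1⟩
    · rintro a b c (rfl | ⟨h1, h2⟩) h
      · exact h
      · rcases h with rfl | ⟨h3, h4⟩
        · exact Or.inr ⟨h1, h2⟩
        · exact Or.inr ⟨h1, h4⟩

/-- The element `x_i` of the left-modular chain: its unique non-singleton block is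
`[i-1] ∪ {n}` (in 1-based terms), i.e. the elements with value `< i-1` or value `n-1`. -/
def xChain (n i : ℕ) : Setoid (Fin n) :=
  blockSetoid {a : Fin n | a.val + 1 < i ∨ a.val = n - 1}

/-- The noncrossing closure: the smallest noncrossing partition above `x`. -/
def ncClosure {n : ℕ} (x : Setoid (Fin n)) : Setoid (Fin n) :=
  sInf {y | IsNoncrossing y ∧ x ≤ y}

/-- The join of two noncrossing partitions in `NC_n`. -/
def joinNC {n : ℕ} (x y : Setoid (Fin n)) : Setoid (Fin n) :=
  ncClosure (x ⊔ y)

/-- The join of a set of noncrossing partitions in `NC_n`. -/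
def joinSetNC {n : ℕ} (X : Set (Setoid (Fin n))) : Setoid (Fin n) :=
  ncClosure (sSup X)

/-- Membership in `PE_n`: noncrossing, `{n-1, n}` is not a block, and it is not the case
that `{n}` is a singleton block while `1 ∼ n-1`. -/
def PEmem {n : ℕ} (x : Setoid (Fin n)) : Prop :=
  IsNoncrossing x ∧
  ¬ IsBlock x {a : Fin n | a.val = n - 2 ∨ a.val = n - 1} ∧
  ¬ (IsBlock x {a : Fin n | a.val = n - 1} ∧
      ∃ a b : Fin n, a.val = 0 ∧ b.val = n - 2 ∧ x.r a b)

/-- `m` is the meet of `x` and `y` in the poset `PE_n`. -/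
def IsMeetPE {n : ℕ} (x y m : Setoid (Fin n)) : Prop :=
  PEmem m ∧ m ≤ x ∧ m ≤ y ∧ ∀ z, PEmem z → z ≤ x → z ≤ y → z ≤ m

/-- `j` is the join of `x` and `y` in the poset `PE_n`. -/
def IsJoinPE {n : ℕ} (x y j : Setoid (Fin n)) : Prop :=
  PEmem j ∧ x ≤ j ∧ y ≤ j ∧ ∀ z, PEmem z → x ≤ z → y ≤ z → j ≤ z

/-- `x ⋖ y` in `PE_n`. -/
def CovPE {n : ℕ} (x y : Setoid (Fin n)) : Prop :=
  PEmem x ∧ PEmem y ∧ x < y ∧ ∀ z, PEmem z → x < z → ¬ z < y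

/-- The atoms of `NC_n`: partitions `a_{i,j}` with unique non-singleton block `{i, j}`. -/
def IsAtomNC {n : ℕ} (a : Setoid (Fin n)) : Prop :=
  ∃ i j : Fin n, i < j ∧ a = blockSetoid {i, j}

/-- The partial order `≼` on atoms of `NC_n` induced by the classes
`A_j = {a : a ≤ x_j and a ≰ x_{j-1}}`. -/
def atomPrec {n : ℕ} (a b : Setoid (Fin n)) : Prop :=
  ∃ i j : ℕ, 1 ≤ i ∧ i < j ∧ j ≤ n - 1 ∧
    (a ≤ xChain n i ∧ ¬ a ≤ xChain n (i - 1)) ∧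
    (b ≤ xChain n j ∧ ¬ b ≤ xChain n (j - 1))

/-- A set of atoms of `NC_n` is bounded below (BB). -/
def IsBBset {n : ℕ} (X : Set (Setoid (Fin n))) : Prop :=
  ∀ d ∈ X, ∃ a, IsAtomNC a ∧ atomPrec a d ∧ a < joinSetNC X

/-- A set of atoms of `NC_n` is NBB: no nonempty subset is bounded below. -/
def IsNBBset {n : ℕ} (X : Set (Setoid (Fin n))) : Prop :=
  ∀ Y ⊆ X, Y.Nonempty → ¬ IsBBset Y

/-- `X` is an NBB base for the top element of `NC_n`. -/
def IsNBBBaseTop {n : ℕ} (X : Set (Setoid (Fin n))) : Prop :=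
  (∀ a ∈ X, IsAtomNC a) ∧ IsNBBset X ∧ joinSetNC X = ⊤

/-- The graph `τ(X)` on vertex set `[n]` associated with a set `X` of atoms:
`i` and `j` are adjacent iff `a_{i,j} ∈ X`. -/
def atomGraph {n : ℕ} (X : Set (Setoid (Fin n))) : SimpleGraph (Fin n) where
  Adj i j := i ≠ j ∧ blockSetoid ({i, j} : Set (Fin n)) ∈ X
  symm := ⟨by
    rintro i j ⟨hne, hm⟩
    exact ⟨hne.symm, by rwa [Set.pair_comm]⟩⟩
  loopless := ⟨fun i h => h.1 rfl⟩

/-- The parking label of the cover `x ⋖ y` is `p`: `y` merges blocks `B₁, B₂` of `x` with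
`min B₁ < min B₂`, and `p = max { j ∈ B₁ : j ≤ i for all i ∈ B₂ }`. -/
def ParkingLabelIs {n : ℕ} (x y : Setoid (Fin n)) (p : Fin n) : Prop :=
  ∃ B₁ B₂ : Set (Fin n), IsBlock x B₁ ∧ IsBlock x B₂ ∧ B₁ ≠ B₂ ∧
    IsBlock y (B₁ ∪ B₂) ∧
    (∃ a ∈ B₁, ∀ b ∈ B₂, a < b) ∧
    p ∈ B₁ ∧ (∀ i ∈ B₂, p ≤ i) ∧ (∀ j ∈ B₁, (∀ i ∈ B₂, j ≤ i) → j ≤ p)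

/-- The label of the cover `w ⋖ z` in the `S_n` EL-labeling of `PE_n` coming from the
left-modular chain: `λ(w,z) = min { i-1 : x_i ≰ w and x_i ≤ z }`. -/
def LabelIs (n : ℕ) (w z : Setoid (Fin n)) (v : ℕ) : Prop :=
  ∃ i : ℕ, 1 ≤ i ∧ i ≤ n ∧ i - 1 = v ∧ (¬ xChain n i ≤ w ∧ xChain n i ≤ z) ∧
    ∀ j : ℕ, 1 ≤ j → j ≤ n → (¬ xChain n j ≤ w ∧ xChain n j ≤ z) → i ≤ j

/-- The sequence of edge labels along a (saturated) chain, recorded as a list. -/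
def chainLabels {α Λ : Type*} (lab : α → α → Λ) (c : List α) : List Λ :=
  List.zipWith lab c c.tail

/-- `c` is a saturated chain from `a` to `b` with respect to the cover relation `cov`. -/
def IsSatChainList {α : Type*} (cov : α → α → Prop) (a b : α) (c : List α) : Prop :=
  c.head? = some a ∧ c.getLast? = some b ∧ c.Chain' cov

/-- A chain is rising if its label sequence is strictly increasing. -/
def RisingChain {α Λ : Type*} [LT Λ] (lab : α → α → Λ) (c : List α) : Prop :=
  (chainLabels lab c).Chain' (· < ·)

/-- `lab` is an EL-labeling with respect to the cover relation `cov` and order `le`: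
every interval has a unique rising maximal chain, which is lexicographically least. -/
def IsELLabeling {α Λ : Type*} [PartialOrder Λ] (cov : α → α → Prop) (le : α → α → Prop)
    (lab : α → α → Λ) : Prop :=
  ∀ a b, le a b → ∃ c : List α, IsSatChainList cov a b c ∧ RisingChain lab c ∧
    (∀ c', IsSatChainList cov a b c' → RisingChain lab c' → c' = c) ∧
    (∀ c', IsSatChainList cov a b c' → c' ≠ c →
      List.Lex (· < ·) (chainLabels lab c) (chainLabels lab c'))

/-!
`PE_n` is obtained from `NC_n` by removing two families, and each family can be repaired
canonically. If the meet `x ⊓ y` in `NC_n` has `{n-1, n}` as a block, splitting that block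
gives the meet in `PE_n`: a lower bound in `PE_n` cannot contain that block, so it already
separates `n-1` from `n`. The join in `NC_n` never has `{n-1, n}` as a block, since `x` and `y`
keep `n-1` and `n` as singletons. If the join lies in `L_2`, every upper bound in `PE_n`
relates `1` to `n-1` without isolating `n`, and noncrossingness then forces `1 ∼ n`; so adding
the pair `{1, n}` and taking the noncrossing closure gives the join in `PE_n`.
-/

variable {n : ℕ}

theorem IsNoncrossing.inf {x y : Setoid (Fin n)} (hx : IsNoncrossing x) (hy : IsNoncrossing y) :
    IsNoncrossing (x ⊓ y) :=
  fun i j k l hij hjk hkl hik hjl =>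
    ⟨hx i j k l hij hjk hkl hik.1 hjl.1, hy i j k l hij hjk hkl hik.2 hjl.2⟩

theorem IsNoncrossing.sInf {S : Set (Setoid (Fin n))} (hS : ∀ y ∈ S, IsNoncrossing y) :
    IsNoncrossing (sInf S) :=
  fun i j k l hij hjk hkl hik hjl y hy => hS y hy i j k l hij hjk hkl (hik y hy) (hjl y hy)

theorem isNoncrossing_blockSetoid (S : Set (Fin n)) : IsNoncrossing (blockSetoid S) := by
  rintro i j k l hij hjk hkl (rfl | ⟨hi, -⟩) (rfl | ⟨hj, -⟩)
  · exact absurd (hij.trans hjk) (lt_irrefl i)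
  · exact absurd (hij.trans hjk) (lt_irrefl i)
  · exact absurd (hjk.trans hkl) (lt_irrefl j)
  · exact Or.inr ⟨hi, hj⟩

theorem blockSetoid_le {S : Set (Fin n)} {z : Setoid (Fin n)}
    (h : ∀ a ∈ S, ∀ b ∈ S, z a b) : blockSetoid S ≤ z := by
  rintro a b (rfl | ⟨ha, hb⟩)
  exacts [z.refl' a, h a ha b hb]

theorem isNoncrossing_ncClosure (s : Setoid (Fin n)) : IsNoncrossing (ncClosure s) :=
  IsNoncrossing.sInf fun _ hy => hy.1

theorem le_ncClosure (s : Setoid (Fin n)) : s ≤ ncClosure s :=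
  le_sInf fun _ hy => hy.2

theorem ncClosure_le {s w : Setoid (Fin n)} (hw : IsNoncrossing w) (hs : s ≤ w) :
    ncClosure s ≤ w :=
  sInf_le ⟨hw, hs⟩

theorem IsBlock.rel {z : Setoid (Fin n)} {B : Set (Fin n)} (h : IsBlock z B) {a b : Fin n}
    (ha : a ∈ B) (hb : b ∈ B) : z a b := by
  obtain ⟨c, rfl⟩ := h
  exact z.trans' (z.symm' ha) hb

theorem IsBlock.mem_of_rel {z : Setoid (Fin n)} {B : Set (Fin n)} (h : IsBlock z B)
    {a b : Fin n} (ha : a ∈ B) (hab : z a b) : b ∈ B := by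
  obtain ⟨c, rfl⟩ := h
  exact z.trans' ha hab

theorem isBlock_singleton_iff {z : Setoid (Fin n)} {c : Fin n} :
    IsBlock z {c} ↔ ∀ d, z c d → d = c :=
  ⟨fun h _ hcd => h.mem_of_rel rfl hcd,
    fun h => ⟨c, Set.ext fun d => ⟨fun hd => hd ▸ z.refl' c, h d⟩⟩⟩

theorem IsBlock.le_blockSetoid_compl {w z : Setoid (Fin n)} {p q : Fin n}
    (hw : IsBlock w {p, q}) (hzw : z ≤ w) (hz : ¬ IsBlock z {p, q}) :
    z ≤ blockSetoid ({p, q}ᶜ) := by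
  have hpq : ¬ z p q := fun hpq => hz ⟨p, Set.ext fun d =>
    ⟨by rintro (rfl | rfl); exacts [z.refl' d, hpq], fun hpd => hw.mem_of_rel (.inl rfl) (hzw hpd)⟩⟩
  intro a b hab
  by_cases heq : a = b
  · exact .inl heq
  have ha_notMem : a ∈ ({p, q} : Set (Fin n)) → False := fun ha => by
    have hb := hw.mem_of_rel ha (hzw hab)
    rcases ha with rfl | rfl <;> rcases hb with rfl | rfl
    exacts [heq rfl, hpq hab, hpq (z.symm' hab), heq rfl]
  exact .inr ⟨ha_notMem, fun hb => ha_notMem (hw.mem_of_rel hb (hzw (z.symm' hab)))⟩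

section Endpoints

/- `a`, `b`, `c` are the paper's `1`, `n-1`, `n`: the elements of `Fin n` are numbered from `0`. -/
variable {a b c : Fin n} (ha : a.val = 0) (hb : b.val = n - 2) (hc : c.val = n - 1)
include ha hb hc

theorem pemem_iff {z : Setoid (Fin n)} :
    PEmem z ↔ IsNoncrossing z ∧ ¬ IsBlock z {b, c} ∧ ¬ (IsBlock z {c} ∧ z a b) := by
  have hblock : {d : Fin n | d.val = n - 2 ∨ d.val = n - 1} = {b, c} := by
    ext d; simp [Fin.ext_iff, hb, hc]
  have hlast : {d : Fin n | d.val = n - 1} = {c} := by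
    ext d; simp [Fin.ext_iff, hc]
  have hrel : (∃ a' b' : Fin n, a'.val = 0 ∧ b'.val = n - 2 ∧ z a' b') ↔ z a b :=
    ⟨fun ⟨a', b', ha', hb', h⟩ => by
        rwa [Fin.ext (ha'.trans ha.symm), Fin.ext (hb'.trans hb.symm)] at h,
      fun h => ⟨a, b, ha, hb, h⟩⟩
  rw [PEmem, hblock, hlast, hrel]

/-- Unless `{c}` is a block, `c` is related to some `d ≠ c`; either `d ∈ {a, b}`, or the arcs
`a — b` and `d — c` cross. -/
theorem IsNoncrossing.rel_last {z : Setoid (Fin n)} (hz : IsNoncrossing z)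
    (hsing : ¬ IsBlock z {c}) (hab : z a b) : z a c := by
  obtain ⟨d, hcd, hdc⟩ : ∃ d, z c d ∧ d ≠ c := by
    simpa [isBlock_singleton_iff] using hsing
  have hd : d.val < n - 1 := by
    have := d.isLt; have := Fin.val_ne_of_ne hdc; omega
  rcases Nat.eq_zero_or_pos d.val with hd0 | hd0
  · exact z.symm' (Fin.ext (hd0.trans ha.symm) ▸ hcd)
  by_cases hdb : d.val = n - 2
  · exact z.trans' hab (z.symm' (Fin.ext (hdb.trans hb.symm) ▸ hcd))
  have had : z a d := hz a d b c (by rw [Fin.lt_def]; omega) (by rw [Fin.lt_def]; omega)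
    (by rw [Fin.lt_def]; omega) hab (z.symm' hcd)
  exact z.trans' had (z.symm' hcd)

variable (hn : 3 ≤ n)
include hn

theorem endpoints_ne : a ≠ b ∧ a ≠ c ∧ b ≠ c := by
  simp only [ne_eq, Fin.ext_iff, ha, hb, hc]
  omega

theorem exists_isMeetPE {x y : Setoid (Fin n)} (hx : PEmem x) (hy : PEmem y) :
    ∃ m, IsMeetPE x y m := by
  rw [pemem_iff ha hb hc] at hx hy
  obtain ⟨hab, hac, hbc⟩ := endpoints_ne ha hb hc hn
  by_cases hblock : IsBlock (x ⊓ y) {b, c}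
  · refine ⟨x ⊓ y ⊓ blockSetoid ({b, c}ᶜ), (pemem_iff ha hb hc).2 ⟨?_, ?_, ?_⟩,
      inf_le_left.trans inf_le_left, inf_le_left.trans inf_le_right, fun z hz hzx hzy => ?_⟩
    · exact (hx.1.inf hy.1).inf (isNoncrossing_blockSetoid _)
    · intro h
      rcases (h.rel (.inl rfl) (.inr rfl)).2 with h | ⟨hb', -⟩
      exacts [hbc h, hb' (.inl rfl)]
    · rintro ⟨-, h⟩
      rcases h.2 with h | ⟨-, hb'⟩
      exacts [hab h, hb' (.inl rfl)]
    · have hzxy := le_inf hzx hzy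
      exact le_inf hzxy (hblock.le_blockSetoid_compl hzxy ((pemem_iff ha hb hc).1 hz).2.1)
  · refine ⟨x ⊓ y, (pemem_iff ha hb hc).2 ⟨hx.1.inf hy.1, hblock, ?_⟩, inf_le_left, inf_le_right,
      fun _ _ => le_inf⟩
    rintro ⟨hsing, hxy⟩
    have hxc := hx.1.rel_last ha hb hc (fun h => hx.2.2 ⟨h, hxy.1⟩) hxy.1
    have hyc := hy.1.rel_last ha hb hc (fun h => hy.2.2 ⟨h, hxy.2⟩) hxy.2
    exact hac (hsing.mem_of_rel rfl (Setoid.symm' _ ⟨hxc, hyc⟩))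

theorem exists_isJoinPE {x y : Setoid (Fin n)} (hx : PEmem x) (hy : PEmem y) :
    ∃ j, IsJoinPE x y j := by
  rw [pemem_iff ha hb hc] at hx hy
  obtain ⟨hab, hac, hbc⟩ := endpoints_ne ha hb hc hn
  set j := joinNC x y
  have hxj : x ≤ j := le_sup_left.trans (le_ncClosure _)
  have hyj : y ≤ j := le_sup_right.trans (le_ncClosure _)
  have hj_le : ∀ z, IsNoncrossing z → x ≤ z → y ≤ z → j ≤ z :=
    fun _ hz hxz hyz => ncClosure_le hz (sup_le hxz hyz)
  have hblock : ¬ IsBlock j {b, c} := fun h => by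
    have hsplit := hj_le _ (isNoncrossing_blockSetoid _)
      (h.le_blockSetoid_compl hxj hx.2.1) (h.le_blockSetoid_compl hyj hy.2.1)
    rcases hsplit (h.rel (.inl rfl) (.inr rfl)) with h | ⟨hb', -⟩
    exacts [hbc h, hb' (.inl rfl)]
  by_cases hL2 : IsBlock j {c} ∧ j a b
  · set j' := joinNC j (blockSetoid {a, c})
    have hjj' : j ≤ j' := le_sup_left.trans (le_ncClosure _)
    have hac' : j' a c := (le_sup_right.trans (le_ncClosure _)) (Or.inr ⟨.inl rfl, .inr rfl⟩)
    refine ⟨j', (pemem_iff ha hb hc).2 ⟨isNoncrossing_ncClosure _, ?_, ?_⟩,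
      hxj.trans hjj', hyj.trans hjj', fun z hz hxz hyz => ?_⟩
    · intro h
      rcases h.mem_of_rel (.inl rfl) (j'.symm' (hjj' hL2.2)) with h | h
      exacts [hab h, hac h]
    · exact fun h => hac (h.1.mem_of_rel rfl (j'.symm' hac'))
    · rw [pemem_iff ha hb hc] at hz
      have hjz := hj_le z hz.1 hxz hyz
      have hzc := hz.1.rel_last ha hb hc (fun h => hz.2.2 ⟨h, hjz hL2.2⟩) (hjz hL2.2)
      refine ncClosure_le hz.1 (sup_le hjz (blockSetoid_le ?_))
      rintro u (rfl | rfl) v (rfl | rfl)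
      exacts [z.refl' _, hzc, z.symm' hzc, z.refl' _]
  · exact ⟨j, (pemem_iff ha hb hc).2 ⟨isNoncrossing_ncClosure _, hblock, hL2⟩, hxj, hyj,
      fun z hz hxz hyz => hj_le z ((pemem_iff ha hb hc).1 hz).1 hxz hyz⟩

end Endpoints

/-- For `n ≥ 3`, the subposet `(PE_n, ≤_dref)` is a lattice: any two of its
elements have a greatest lower bound and a least upper bound within `PE_n`. -/
theorem PE_lattice (n : ℕ) (hn : 3 ≤ n) (x y : Setoid (Fin n))
    (hx : PEmem x) (hy : PEmem y) :
    (∃ m, IsMeetPE x y m) ∧ (∃ j, IsJoinPE x y j) :=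
  ⟨exists_isMeetPE (a := ⟨0, by omega⟩) (b := ⟨n - 2, by omega⟩) (c := ⟨n - 1, by omega⟩)
      rfl rfl rfl hn hx hy,
    exists_isJoinPE (a := ⟨0, by omega⟩) (b := ⟨n - 2, by omega⟩) (c := ⟨n - 1, by omega⟩)
      rfl rfl rfl hn hx hy⟩
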